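/- Let δ and k be positive integers with δ < k. If G is a nonempty graph with minimum degree δ in which every vertex of degree exactly δ has a neighbor of degree at least k, and in addition every vertex of degree at least k has a neighbor of degree strictly larger than δ, then the average degree of G satisfies d(G) ≥ δ + (k − δ)/k. -/

import Mathlib

open SimpleGraph

/-- `G` contains a subgraph isomorphic to `H`. -/
def ContainsCopy {α β : Type*} (G : SimpleGraph α) (H : SimpleGraph β) : Prop :=
  ∃ f : β → α, Function.Injective f ∧ ∀ ⦃u v : β⦄, H.Adj u v → G.Adj (f u) (f v)

/-- `G` is `H`-saturated: `G` is `H`-free but adding any edge creates a copy of `H`. -/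
def IsSat {α β : Type*} (G : SimpleGraph α) (H : SimpleGraph β) : Prop :=
  ¬ ContainsCopy G H ∧
    ∀ x y : α, x ≠ y → ¬ G.Adj x y →
      ContainsCopy (G ⊔ SimpleGraph.fromEdgeSet {s(x, y)}) H

/-- The degree of a vertex. -/
noncomputable def deg {α : Type*} (G : SimpleGraph α) (v : α) : ℕ :=
  (G.neighborSet v).ncard

/-- `wt0 uv = max (d u) (d v) - 1`. -/
noncomputable def wt0 {β : Type*} (H : SimpleGraph β) (u v : β) : ℕ :=
  max (deg H u) (deg H v) - 1

/-- The neighborhood of the edge `uv`: `(N(u) - v) ∪ (N(v) - u)`. -/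
def edgeNbhd {β : Type*} (H : SimpleGraph β) (u v : β) : Set β :=
  (H.neighborSet u \ {v}) ∪ (H.neighborSet v \ {u})

/-- `wt1 uv`: the maximum degree of a vertex in the neighborhood of the edge `uv`. -/
noncomputable def wt1 {β : Type*} (H : SimpleGraph β) (u v : β) : ℕ :=
  sSup (deg H '' edgeNbhd H u v)

/-- `k0`: the minimum of `wt0` over the edges of `H`. -/
noncomputable def paramK0 {β : Type*} (H : SimpleGraph β) : ℕ :=
  sInf {k | ∃ u v, H.Adj u v ∧ wt0 H u v = k}

/-- `k1`: the minimum of `wt1` over the edges of `H`. -/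
noncomputable def paramK1 {β : Type*} (H : SimpleGraph β) : ℕ :=
  sInf {k | ∃ u v, H.Adj u v ∧ wt1 H u v = k}

/-- `k1'`: the minimum of `wt1` over the edges of `H` minimizing `wt0`. -/
noncomputable def paramK1p {β : Type*} (H : SimpleGraph β) : ℕ :=
  sInf {k | ∃ u v, H.Adj u v ∧ wt0 H u v = paramK0 H ∧ wt1 H u v = k}

/-- `k0'`: the minimum of `wt0` over the edges of `H` minimizing `wt1`. -/
noncomputable def paramK0p {β : Type*} (H : SimpleGraph β) : ℕ :=
  sInf {k | ∃ u v, H.Adj u v ∧ wt1 H u v = paramK1 H ∧ wt0 H u v = k}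

/-!
Discharging with `c = (k - δ)/k`: give every vertex the charge `d(v) - δ - c`, so that it
suffices to show the total charge is nonnegative. Only the vertices of degree `δ` are negative,
each with charge `-c`; each of them takes `c` from a neighbor of degree at least `k`. A vertex `b`
of degree at least `k` has a neighbor of degree larger than `δ`, so it gives `c` to at most
`d(b) - 1` vertices, and `d(b) - δ - c ≥ (d(b) - 1) c` is exactly `d(b) c ≤ d(b) - δ`, i.e.
`δ/k ≤ δ/d(b)`.
-/

open Finset

theorem deg_eq_degree {α : Type*} [Fintype α] (G : SimpleGraph α) [DecidableRel G.Adj] (v : α) :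
    deg G v = G.degree v := by
  simp [deg, SimpleGraph.degree, SimpleGraph.neighborFinset, Set.ncard_eq_toFinset_card']

theorem mul_sub_div_le_sub {δ k d : ℝ} (hδ : 0 ≤ δ) (hk : 0 < k) (hkd : k ≤ d) :
    d * ((k - δ) / k) ≤ d - δ := by
  rw [mul_div_assoc', div_le_iff₀ hk]
  nlinarith

theorem sum_nonneg_of_discharge {α : Type*} [Fintype α] {g : α → ℝ} {n : α → ℕ}
    {c : ℝ} {S B : Finset α} (hc : 0 ≤ c) (hcount : #S ≤ ∑ b ∈ B, n b)
    (hS : ∀ v ∈ S, g v = -c) (hB : ∀ b ∈ B, n b * c ≤ g b) (hnotS : ∀ v ∉ S, 0 ≤ g v)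
    (hBS : Disjoint B S) :
    0 ≤ ∑ v, g v := by
  classical
  rw [← sum_filter_add_sum_filter_not univ (· ∈ S), filter_mem_eq_inter, univ_inter,
    sum_congr rfl hS, sum_const, nsmul_eq_mul]
  calc (0 : ℝ) = #S * -c + #S * c := by ring
    _ ≤ #S * -c + ∑ b ∈ B, n b * c := by
        rw [← sum_mul]
        gcongr
        exact_mod_cast hcount
    _ ≤ #S * -c + ∑ b ∈ B, g b := by gcongr with b hb; exact hB b hb
    _ ≤ #S * -c + ∑ v ∈ univ.filter (· ∉ S), g v := by
        have hBS' : B ⊆ univ.filter (· ∉ S) := fun b hb =>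
          mem_filter.2 ⟨mem_univ b, Finset.disjoint_left.1 hBS hb⟩
        gcongr
        exact fun v hv _ => hnotS v (mem_filter.1 hv).2

namespace SimpleGraph

variable {α : Type*} [Fintype α] [DecidableEq α] (G : SimpleGraph α) [DecidableRel G.Adj]

theorem card_le_sum_card_neighborFinset_inter {S B : Finset α}
    (h : ∀ s ∈ S, ∃ b ∈ B, G.Adj s b) :
    #S ≤ ∑ b ∈ B, #(G.neighborFinset b ∩ S) := by
  refine (card_le_card fun s hs => ?_).trans card_biUnion_le
  obtain ⟨b, hb, hsb⟩ := h s hs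
  exact mem_biUnion.2 ⟨b, hb, mem_inter.2 ⟨(G.mem_neighborFinset b s).2 hsb.symm, hs⟩⟩

theorem card_neighborFinset_inter_lt_degree {S : Finset α} {b w : α} (hbw : G.Adj b w)
    (hw : w ∉ S) : #(G.neighborFinset b ∩ S) < G.degree b := by
  rw [← card_neighborFinset_eq_degree]
  refine card_lt_card ((ssubset_iff_of_subset inter_subset_left).2 ⟨w, ?_, ?_⟩)
  · exact (G.mem_neighborFinset b w).2 hbw
  · exact fun hw' => hw (mem_inter.1 hw').2

theorem mul_card_le_sum_degree {δ k : ℕ} (hδk : δ < k) (hmin : ∀ v, δ ≤ G.degree v)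
    (hnbr : ∀ v, G.degree v = δ → ∃ w, G.Adj v w ∧ k ≤ G.degree w)
    (hbig : ∀ v, k ≤ G.degree v → ∃ w, G.Adj v w ∧ δ < G.degree w) :
    ((δ : ℝ) + ((k : ℝ) - δ) / k) * Fintype.card α ≤ ∑ v, (G.degree v : ℝ) := by
  set c : ℝ := ((k : ℝ) - δ) / k
  set S := univ.filter (G.degree · = δ)
  set B := univ.filter (k ≤ G.degree ·)
  have hk : (0 : ℝ) < k := by exact_mod_cast (Nat.zero_le δ).trans_lt hδk
  have hc0 : 0 ≤ c := div_nonneg (sub_nonneg.2 (by exact_mod_cast hδk.le)) hk.le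
  have hc1 : c ≤ 1 := by
    rw [div_le_one hk]
    linarith [(Nat.cast_nonneg δ : (0 : ℝ) ≤ δ)]
  have hcount : #S ≤ ∑ b ∈ B, #(G.neighborFinset b ∩ S) := by
    refine G.card_le_sum_card_neighborFinset_inter fun s hs => ?_
    obtain ⟨w, hsw, hw⟩ := hnbr s (mem_filter.1 hs).2
    exact ⟨w, mem_filter.2 ⟨mem_univ w, hw⟩, hsw⟩
  have hB : ∀ b ∈ B, #(G.neighborFinset b ∩ S) * c ≤ (G.degree b : ℝ) - δ - c := by
    intro b hb
    have hkb : k ≤ G.degree b := (mem_filter.1 hb).2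
    obtain ⟨w, hbw, hw⟩ := hbig b hkb
    have hlt : (#(G.neighborFinset b ∩ S) : ℝ) + 1 ≤ G.degree b := by
      exact_mod_cast G.card_neighborFinset_inter_lt_degree hbw (by simp [S, hw.ne'])
    have := mul_sub_div_le_sub (Nat.cast_nonneg δ) hk (d := G.degree b) (by exact_mod_cast hkb)
    nlinarith
  have hnotS : ∀ v ∉ S, 0 ≤ (G.degree v : ℝ) - δ - c := by
    intro v hv
    have : δ < G.degree v := lt_of_le_of_ne (hmin v) fun h => hv (by simp [S, h])
    have : (δ : ℝ) + 1 ≤ G.degree v := by exact_mod_cast this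
    linarith
  have hBS : Disjoint B S := disjoint_filter.2 fun v _ hkv hv => (hδk.trans_le hkv).ne' hv
  have := sum_nonneg_of_discharge hc0 hcount (fun v hv => by simp [(mem_filter.1 hv).2]) hB
    hnotS hBS
  simp only [sum_sub_distrib, sum_const, card_univ, nsmul_eq_mul] at this
  linarith

end SimpleGraph

theorem stmt5_general {α : Type*} [Fintype α] (δ k : ℕ)
    (hδk : δ < k) (G : SimpleGraph α)
    (hmin : (∀ v, δ ≤ deg G v) ∧ ∃ v, deg G v = δ)
    (hnbr : ∀ v, deg G v = δ → ∃ w, G.Adj v w ∧ k ≤ deg G w)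
    (hbig : ∀ v, k ≤ deg G v → ∃ w, G.Adj v w ∧ δ < deg G w) :
    (δ : ℝ) + ((k : ℝ) - (δ : ℝ)) / (k : ℝ) ≤
      (∑ v : α, (deg G v : ℝ)) / (Fintype.card α : ℝ) := by
  classical
  obtain ⟨hmin, v, -⟩ := hmin
  simp only [deg_eq_degree] at hmin hnbr hbig ⊢
  rw [le_div_iff₀ (by exact_mod_cast Fintype.card_pos_iff.2 ⟨v⟩)]
  exact G.mul_card_le_sum_degree hδk hmin hnbr hbig

/-- Prop. warmup, second part: if in addition every vertex of degree at least `k` has a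
neighbor of degree strictly larger than `δ`, then `d(G) ≥ δ + (k - δ)/k`. -/
theorem stmt5 {α : Type*} [Fintype α] [Nonempty α] (δ k : ℕ)
    (hδ : 0 < δ) (hδk : δ < k) (G : SimpleGraph α)
    (hmin : (∀ v, δ ≤ deg G v) ∧ ∃ v, deg G v = δ)
    (hnbr : ∀ v, deg G v = δ → ∃ w, G.Adj v w ∧ k ≤ deg G w)
    (hbig : ∀ v, k ≤ deg G v → ∃ w, G.Adj v w ∧ δ < deg G w) :
    (δ : ℝ) + ((k : ℝ) - (δ : ℝ)) / (k : ℝ) ≤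
      (∑ v : α, (deg G v : ℝ)) / (Fintype.card α : ℝ) :=
  stmt5_general δ k hδk G hmin hnbr hbig
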